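/- arXiv:0802.0123 — 4 statements merged into one kernel-verified Lean document; each statement's English description precedes it below -/
import Mathlib

section
/- Let n be a natural number and let e_0, e_1, …, e_{2n+1} be real numbers satisfying Σ_{k=0}^{2n+1} (−1)^k e_k = 0. For 0 ≤ k ≤ 2n set N_k = Σ_{j=0}^{k} (−1)^{k−j} e_j, and define the weight w(k) = k if k ≤ n and w(k) = k+1 if k > n. Then Σ_{k=0}^{2n} c_k N_k = Σ_{k=0}^{2n+1} (−1)^k w(k) e_k, where c_k = (−1)^{k+1} for k ≠ n and c_n = 2·(−1)^{n+1}. -/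
/-!
With `N_k` the alternating partial sums of `e`, one has `N_0 = e_0` and `N_k + N_{k+1} = e_{k+1}`,
so Abel summation turns `∑ a_k e_k` into `∑ (a_k + a_{k+1}) N_k` plus a boundary term
`a_{2n+1} N_{2n+1}`, which vanishes since `N_{2n+1} = -∑ (-1)^k e_k = 0`. For
`a_k = (-1)^k w(k)` the coefficients `a_k + a_{k+1}` are `(-1)^{k+1}`, except at `k = n`, where
the weight jumps by two and the coefficient doubles.
-/

open Finset

variable {R : Type*} [CommRing R]

def altPartialSum (e : ℕ → R) (k : ℕ) : R :=
  ∑ j ∈ range (k + 1), (-1) ^ (k - j) * e j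

def contactWeight (n k : ℕ) : R :=
  if k ≤ n then k else k + 1

theorem altPartialSum_eq (e : ℕ → R) (k : ℕ) :
    altPartialSum e k = (-1) ^ k * ∑ j ∈ range (k + 1), (-1) ^ j * e j := by
  rw [altPartialSum, mul_sum]
  refine sum_congr rfl fun j hj => ?_
  have hjk : j ≤ k := Nat.lt_succ_iff.mp (mem_range.mp hj)
  obtain ⟨i, rfl⟩ := Nat.exists_eq_add_of_le hjk
  have hsq : (-1 : R) ^ (j + j) = 1 := Even.neg_one_pow ⟨j, rfl⟩
  rw [Nat.add_sub_cancel_left]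
  linear_combination (-(-1) ^ i * e j) * hsq

theorem altPartialSum_zero (e : ℕ → R) : altPartialSum e 0 = e 0 := by
  simp [altPartialSum]

theorem altPartialSum_succ (e : ℕ → R) (k : ℕ) :
    altPartialSum e (k + 1) = e (k + 1) - altPartialSum e k := by
  have hsq : (-1 : R) ^ (k + 1 + (k + 1)) = 1 := Even.neg_one_pow ⟨k + 1, rfl⟩
  rw [altPartialSum_eq, altPartialSum_eq, sum_range_succ]
  linear_combination e (k + 1) * hsq

theorem sum_mul_eq_sum_add_mul_altPartialSum (e a : ℕ → R) (M : ℕ) :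
    ∑ k ∈ range (M + 1), a k * e k =
      ∑ k ∈ range M, (a k + a (k + 1)) * altPartialSum e k + a M * altPartialSum e M := by
  induction M with
  | zero => simp [altPartialSum_zero]
  | succ M ih =>
    rw [sum_range_succ, ih, sum_range_succ, altPartialSum_succ]
    ring

theorem neg_one_pow_mul_contactWeight_add_succ (n k : ℕ) :
    (-1 : R) ^ k * contactWeight n k + (-1) ^ (k + 1) * contactWeight n (k + 1) =
      if k = n then 2 * (-1) ^ (n + 1) else (-1) ^ (k + 1) := by
  unfold contactWeight
  split_ifs <;> first | omega | (subst_vars; push_cast; ring)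

/-- the finite combinatorial identity underlying the computation of the
Reidemeister–Franz torsion of the spectral cut-off subcomplexes of the contact complex.
Here `e k` plays the role of `e_k`, `N_k = ∑_{j=0}^k (-1)^{k-j} e_j`, the weight is
`w k = k` for `k ≤ n` and `k+1` for `k > n`, and `c k = (-1)^{k+1}` for `k ≠ n`,
`c n = 2 (-1)^{n+1}`. -/
theorem stmt0 (n : ℕ) (e : ℕ → ℝ)
    (h : ∑ k ∈ Finset.range (2 * n + 2), (-1 : ℝ) ^ k * e k = 0) :
    ∑ k ∈ Finset.range (2 * n + 1),
        (if k = n then 2 * (-1 : ℝ) ^ (n + 1) else (-1 : ℝ) ^ (k + 1)) *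
          (∑ j ∈ Finset.range (k + 1), (-1 : ℝ) ^ (k - j) * e j) =
      ∑ k ∈ Finset.range (2 * n + 2),
        (-1 : ℝ) ^ k * (if k ≤ n then (k : ℝ) else (k : ℝ) + 1) * e k := by
  set a : ℕ → ℝ := fun k => (-1) ^ k * contactWeight n k
  calc _ = ∑ k ∈ range (2 * n + 1), (a k + a (k + 1)) * altPartialSum e k := by
        simp only [a, neg_one_pow_mul_contactWeight_add_succ, altPartialSum]
    _ = ∑ k ∈ range (2 * n + 2), a k * e k := by
        rw [sum_mul_eq_sum_add_mul_altPartialSum e a (2 * n + 1), altPartialSum_eq e (2 * n + 1),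
          h, mul_zero, mul_zero, add_zero]
    _ = _ := rfl
end

section
/- Let m ≥ 1 be a natural number and set K = ⌊m/2⌋. Let (a_j)_{j∈ℕ} be a sequence of nonnegative reals such that Σ_j e^{−t·a_j} converges for every t > 0, and suppose there are real numbers c_0, …, c_K such that the remainder B(t) := Σ_j e^{−t·a_j} − Σ_{k=0}^{K} c_k · t^{k−m/2} is bounded on (0,∞) and B(t) → 0 as t → 0⁺. Then for every t > 0 the sum Σ_j e^{−t·√(a_j)} converges, and as t → 0⁺ one has Σ_j e^{−t·√(a_j)} − Σ_{k=0}^{K} (2^{m−2k}/√π) · Γ((m−2k+1)/2) · c_k · t^{2k−m} → 0. -/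
/-!
Subordination. For `b ≥ 0` the substitution `u = v²` and completing the square,
`v² + b²/(4v²) = b + (v - b/(2v))²`, reduce `∫₀^∞ e^{-u} u^{-1/2} e^{-b²/(4u)} du` to
`2 e^{-b} ∫₀^∞ e^{-(v - c/v)²} dv` with `c = b/2`, and this last integral equals `√π/2` for every
`c ≥ 0` (Glasser): `v ↦ v - c/v` maps `(0,∞)` onto `ℝ` with Jacobian `1 + c/v²`, and
`v ↦ c/v` shows that the two halves of this Jacobian contribute equally.

Hence `√π e^{-t√a} = ∫₀^∞ e^{-u} u^{-1/2} e^{-a t²/(4u)} du`. Summing over the `a_j` (the terms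
are nonnegative, so sum and integral commute) turns the heat trace `θ` into `√π` times the Poisson trace, the powers `s^{k-m/2}`
into Gamma integrals (convergent because `k ≤ m/2`), and the bounded remainder `B` into an
integral that tends to `0` as `t → 0⁺` by dominated convergence, since `t²/(4u) → 0⁺` for each
fixed `u > 0`.
-/

open Filter Topology MeasureTheory Real Set

lemma hasDerivAt_sub_div (c : ℝ) {v : ℝ} (hv : v ≠ 0) :
    HasDerivAt (fun v : ℝ => v - c / v) (1 + c / v ^ 2) v :=
  ((hasDerivAt_id' v).sub ((hasDerivAt_const v c).div (hasDerivAt_id' v) hv)).congr_deriv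
    (by ring)

lemma strictMonoOn_sub_div {c : ℝ} (hc : 0 ≤ c) :
    StrictMonoOn (fun v : ℝ => v - c / v) (Ioi 0) := by
  intro x hx y _ hxy
  have : c / y ≤ c / x := div_le_div_of_nonneg_left hc hx hxy.le
  simp only
  linarith

lemma image_sub_div_Ioi {c : ℝ} (hc : 0 < c) : (fun v : ℝ => v - c / v) '' Ioi 0 = univ := by
  refine eq_univ_of_forall fun w => ?_
  have hS : √(w ^ 2 + 4 * c) ^ 2 = w ^ 2 + 4 * c := sq_sqrt (by positivity)
  have hSw : -w < √(w ^ 2 + 4 * c) := by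
    nlinarith [sqrt_nonneg (w ^ 2 + 4 * c), neg_le_abs w, sq_abs w, abs_nonneg w]
  have hpos : 0 < w + √(w ^ 2 + 4 * c) := by linarith
  refine ⟨(w + √(w ^ 2 + 4 * c)) / 2, by simp only [mem_Ioi]; linarith, ?_⟩
  field_simp
  nlinarith

lemma abs_one_add_div_sq_smul {c : ℝ} (hc : 0 ≤ c) (g : ℝ → ℝ) {v : ℝ} (hv : v ∈ Ioi 0) :
    |1 + c / v ^ 2| • g (v - c / v) = (1 + c / v ^ 2) * g (v - c / v) := by
  have : 0 < v := hv
  rw [smul_eq_mul, abs_of_pos (by positivity)]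

lemma integrableOn_comp_sub_div_Ioi_iff {c : ℝ} (hc : 0 < c) (g : ℝ → ℝ) :
    IntegrableOn (fun v => (1 + c / v ^ 2) * g (v - c / v)) (Ioi 0) ↔ Integrable g := by
  have h := integrableOn_image_iff_integrableOn_abs_deriv_smul measurableSet_Ioi
    (fun v hv => (hasDerivAt_sub_div c (ne_of_gt hv)).hasDerivWithinAt)
    (strictMonoOn_sub_div hc.le).injOn g
  rwa [image_sub_div_Ioi hc, integrableOn_univ, Iff.comm,
    integrableOn_congr_fun (fun v => abs_one_add_div_sq_smul hc.le g) measurableSet_Ioi] at h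

lemma integral_comp_sub_div_Ioi {c : ℝ} (hc : 0 < c) (g : ℝ → ℝ) :
    ∫ v in Ioi 0, (1 + c / v ^ 2) * g (v - c / v) = ∫ w, g w := by
  have h := integral_image_eq_integral_abs_deriv_smul measurableSet_Ioi
    (fun v hv => (hasDerivAt_sub_div c (ne_of_gt hv)).hasDerivWithinAt)
    (strictMonoOn_sub_div hc.le).injOn g
  rw [image_sub_div_Ioi hc, setIntegral_univ,
    setIntegral_congr_fun measurableSet_Ioi fun v => abs_one_add_div_sq_smul hc.le g] at h
  exact h.symm

lemma integral_comp_div_Ioi {c : ℝ} (hc : 0 < c) (g : ℝ → ℝ) :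
    ∫ v in Ioi 0, c / v ^ 2 * g (c / v) = ∫ v in Ioi 0, g v := by
  have hderiv : ∀ v ∈ Ioi (0 : ℝ), HasDerivWithinAt (fun v => c / v) (-(c / v ^ 2)) (Ioi 0) v :=
    fun v hv => (((hasDerivAt_const v c).div (hasDerivAt_id' v) (ne_of_gt hv)).congr_deriv
      (by ring)).hasDerivWithinAt
  have himage : (fun v => c / v) '' Ioi 0 = Ioi 0 := by
    ext u
    refine ⟨fun ⟨v, hv, hu⟩ => hu ▸ div_pos hc hv, fun hu => ⟨c / u, div_pos hc hu, ?_⟩⟩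
    field_simp [(mem_Ioi.mp hu).ne']
  have hinj : InjOn (fun v => c / v) (Ioi 0) := fun x _ y _ hxy =>
    inv_injective (mul_left_cancel₀ hc.ne' hxy)
  have h := integral_image_eq_integral_abs_deriv_smul measurableSet_Ioi hderiv hinj g
  rw [himage] at h
  rw [h]
  refine setIntegral_congr_fun measurableSet_Ioi fun v hv => ?_
  rw [smul_eq_mul, abs_neg, abs_of_pos (div_pos hc (pow_pos hv 2))]

lemma integral_exp_neg_sq_sub_div {c : ℝ} (hc : 0 ≤ c) :
    ∫ v in Ioi 0, exp (-(v - c / v) ^ 2) = √π / 2 := by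
  rcases hc.eq_or_lt with rfl | hc
  · simpa using integral_gaussian_Ioi 1
  set F : ℝ → ℝ := fun v => exp (-(v - c / v) ^ 2)
  have hgauss : ∫ w, exp (-w ^ 2) = √π := by simpa using integral_gaussian 1
  have hint : IntegrableOn (fun v => (1 + c / v ^ 2) * F v) (Ioi 0) :=
    (integrableOn_comp_sub_div_Ioi_iff hc _).mpr
      (by simpa using integrable_exp_neg_mul_sq one_pos)
  have hsplit : ∀ v ∈ Ioi (0 : ℝ), 0 ≤ F v ∧ 0 ≤ c / v ^ 2 * F v ∧
      (1 + c / v ^ 2) * F v = F v + c / v ^ 2 * F v :=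
    fun v _ => ⟨(exp_pos _).le, by positivity, by ring⟩
  have hF : IntegrableOn F (Ioi 0) := by
    refine hint.mono' (by fun_prop) ((ae_restrict_mem measurableSet_Ioi).mono fun v hv => ?_)
    obtain ⟨h₁, h₂, h₃⟩ := hsplit v hv
    rw [norm_of_nonneg h₁, h₃]
    linarith
  have hcF : IntegrableOn (fun v => c / v ^ 2 * F v) (Ioi 0) := by
    refine hint.mono' (by fun_prop) ((ae_restrict_mem measurableSet_Ioi).mono fun v hv => ?_)
    obtain ⟨h₁, h₂, h₃⟩ := hsplit v hv
    rw [norm_of_nonneg h₂, h₃]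
    linarith
  -- substitute `v ↦ c / v`, under which `F` is invariant
  have hswap : ∫ v in Ioi 0, c / v ^ 2 * F v = ∫ v in Ioi 0, F v := by
    rw [← integral_comp_div_Ioi hc F]
    refine setIntegral_congr_fun measurableSet_Ioi fun v hv => ?_
    simp only [F]
    congr 3
    field_simp [(mem_Ioi.mp hv).ne']
    ring
  have h := integral_comp_sub_div_Ioi hc fun w => exp (-w ^ 2)
  rw [setIntegral_congr_fun measurableSet_Ioi fun v hv => (hsplit v hv).2.2,
    integral_add hF hcF, hswap, hgauss] at h
  linarith

noncomputable def subordinationIntegrand (f : ℝ → ℝ) (t u : ℝ) : ℝ :=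
  exp (-u) / √u * f (t ^ 2 / (4 * u))

noncomputable def subordinationIntegral (f : ℝ → ℝ) (t : ℝ) : ℝ :=
  ∫ u in Ioi 0, subordinationIntegrand f t u

lemma mapsTo_sq_div_Ioi {t : ℝ} (ht : t ≠ 0) :
    MapsTo (fun u => t ^ 2 / (4 * u)) (Ioi 0) (Ioi 0) :=
  fun u hu => by have : 0 < u := hu; simp only [mem_Ioi]; positivity

lemma subordinationIntegral_exp_neg_mul {a t : ℝ} (ha : 0 ≤ a) (ht : 0 ≤ t) :
    subordinationIntegral (fun s => exp (-s * a)) t = √π * exp (-t * √a) := by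
  have hsq : ∀ v ∈ Ioi (0 : ℝ), (2 * v ^ ((2 : ℝ) - 1)) •
      subordinationIntegrand (fun s => exp (-s * a)) t (v ^ (2 : ℝ)) =
      2 * exp (-t * √a) * exp (-(v - t * √a / 2 / v) ^ 2) := by
    intro v hv
    have hv : 0 < v := hv
    have hexp :
        -v ^ 2 + -(t ^ 2 / (4 * v ^ 2)) * a = -t * √a + -(v - t * √a / 2 / v) ^ 2 := by
      field_simp
      linear_combination (4 * t ^ 2) * sq_sqrt ha
    rw [subordinationIntegrand, smul_eq_mul, rpow_two, sqrt_sq hv.le,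
      (by norm_num : (2 : ℝ) - 1 = 1), rpow_one, mul_assoc 2 (exp _), ← exp_add, ← hexp, exp_add]
    field_simp
  rw [subordinationIntegral, ← integral_comp_rpow_Ioi_of_pos two_pos,
    setIntegral_congr_fun measurableSet_Ioi hsq, integral_const_mul,
    integral_exp_neg_sq_sub_div (by positivity)]
  ring

lemma exp_neg_div_sqrt_eq {u : ℝ} (hu : 0 < u) :
    exp (-u) / √u = exp (-u) * u ^ ((1 / 2 : ℝ) - 1) := by
  rw [sqrt_eq_rpow, div_eq_mul_inv, ← rpow_neg hu.le]
  norm_num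

lemma integrableOn_exp_neg_div_sqrt : IntegrableOn (fun u => exp (-u) / √u) (Ioi 0) :=
  (GammaIntegral_convergent one_half_pos).congr_fun
    (fun _ hu => (exp_neg_div_sqrt_eq hu).symm) measurableSet_Ioi

lemma subordinationIntegrand_rpow {α t u : ℝ} (ht : 0 < t) (hu : 0 < u) :
    subordinationIntegrand (fun s => s ^ α) t u =
      2 ^ (-2 * α) * t ^ (2 * α) * (exp (-u) * u ^ (1 / 2 - α - 1)) := by
  rw [subordinationIntegrand, exp_neg_div_sqrt_eq hu, div_rpow (by positivity) (by positivity),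
    mul_rpow (by norm_num) hu.le, rpow_sub hu, rpow_sub hu, ← rpow_natCast, ← rpow_mul ht.le,
    show (4 : ℝ) = 2 ^ (2 : ℝ) by norm_num, ← rpow_mul two_pos.le, neg_mul,
    rpow_neg two_pos.le, rpow_sub hu, Nat.cast_ofNat]
  field_simp

lemma integrableOn_subordinationIntegrand_rpow {α t : ℝ} (hα : α < 1 / 2) (ht : 0 < t) :
    IntegrableOn (subordinationIntegrand (fun s => s ^ α) t) (Ioi 0) :=
  IntegrableOn.congr_fun ((GammaIntegral_convergent (sub_pos.mpr hα)).const_mul _)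
    (fun _ hu => (subordinationIntegrand_rpow ht hu).symm) measurableSet_Ioi

lemma subordinationIntegral_rpow {α t : ℝ} (hα : α < 1 / 2) (ht : 0 < t) :
    subordinationIntegral (fun s => s ^ α) t =
      2 ^ (-2 * α) * t ^ (2 * α) * Gamma (1 / 2 - α) := by
  rw [subordinationIntegral, setIntegral_congr_fun measurableSet_Ioi
    (fun _ hu => subordinationIntegrand_rpow ht hu), integral_const_mul,
    Gamma_eq_integral (sub_pos.mpr hα)]

lemma subordinationIntegrand_sum {ι : Type*} (S : Finset ι) (c : ι → ℝ) (f : ι → ℝ → ℝ)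
    (t u : ℝ) :
    subordinationIntegrand (fun s => ∑ i ∈ S, c i * f i s) t u =
      ∑ i ∈ S, c i * subordinationIntegrand (f i) t u := by
  simp only [subordinationIntegrand, Finset.mul_sum]
  exact Finset.sum_congr rfl fun _ _ => by ring

lemma integrableOn_subordinationIntegrand_sum_rpow {ι : Type*} {S : Finset ι} (c : ι → ℝ)
    {α : ι → ℝ} (hα : ∀ i ∈ S, α i < 1 / 2) {t : ℝ} (ht : 0 < t) :
    IntegrableOn (subordinationIntegrand (fun s => ∑ i ∈ S, c i * s ^ α i) t) (Ioi 0) :=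
  IntegrableOn.congr_fun (integrable_finsetSum _ fun i hi =>
      (integrableOn_subordinationIntegrand_rpow (hα i hi) ht).const_mul (c i))
    (fun u _ => (subordinationIntegrand_sum S c _ t u).symm) measurableSet_Ioi

lemma subordinationIntegral_sum_rpow {ι : Type*} {S : Finset ι} (c : ι → ℝ)
    {α : ι → ℝ} (hα : ∀ i ∈ S, α i < 1 / 2) {t : ℝ} (ht : 0 < t) :
    subordinationIntegral (fun s => ∑ i ∈ S, c i * s ^ α i) t =
      ∑ i ∈ S, c i * (2 ^ (-2 * α i) * t ^ (2 * α i) * Gamma (1 / 2 - α i)) := by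
  simp only [subordinationIntegral, subordinationIntegrand_sum]
  rw [integral_finsetSum _ fun i hi =>
    (integrableOn_subordinationIntegrand_rpow (hα i hi) ht).const_mul (c i)]
  refine Finset.sum_congr rfl fun i hi => ?_
  rw [integral_const_mul, ← subordinationIntegral, subordinationIntegral_rpow (hα i hi) ht]

lemma natCast_sub_half_lt_half {m k : ℕ} (hk : k ∈ Finset.range (m / 2 + 1)) :
    (k : ℝ) - m / 2 < 1 / 2 := by
  have : (k : ℝ) ≤ m / 2 :=
    (Nat.cast_le.mpr (Finset.mem_range_succ_iff.mp hk)).trans Nat.cast_div_le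
  linarith

lemma subordinationIntegral_sum_rpow_sub_half (m : ℕ) (c : ℕ → ℝ) {t : ℝ} (ht : 0 < t) :
    subordinationIntegral
        (fun s => ∑ k ∈ Finset.range (m / 2 + 1), c k * s ^ ((k : ℝ) - m / 2)) t =
      √π * ∑ k ∈ Finset.range (m / 2 + 1),
        2 ^ ((m : ℝ) - 2 * k) / √π * Gamma (((m : ℝ) - 2 * k + 1) / 2) * c k *
          t ^ (2 * (k : ℝ) - m) := by
  rw [subordinationIntegral_sum_rpow c (fun k hk => natCast_sub_half_lt_half hk) ht,
    Finset.mul_sum]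
  refine Finset.sum_congr rfl fun k _ => ?_
  rw [show -2 * ((k : ℝ) - m / 2) = m - 2 * k by ring,
    show 2 * ((k : ℝ) - m / 2) = 2 * k - m by ring,
    show 1 / 2 - ((k : ℝ) - m / 2) = (m - 2 * k + 1) / 2 by ring]
  field_simp


lemma continuousOn_subordinationIntegrand {f : ℝ → ℝ} (hf : ContinuousOn f (Ioi 0)) {t : ℝ}
    (ht : t ≠ 0) : ContinuousOn (subordinationIntegrand f t) (Ioi 0) := by
  have hu : ∀ u ∈ Ioi (0 : ℝ), u ≠ 0 := fun u hu => ne_of_gt hu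
  refine ContinuousOn.mul (by fun_prop (disch := simp_all)) (hf.comp ?_ (mapsTo_sq_div_Ioi ht))
  fun_prop (disch := simp_all)

lemma norm_subordinationIntegrand_le {f : ℝ → ℝ} {C : ℝ} (hC : ∀ s > 0, |f s| ≤ C) {t u : ℝ}
    (ht : t ≠ 0) (hu : 0 < u) : ‖subordinationIntegrand f t u‖ ≤ C * (exp (-u) / √u) := by
  rw [subordinationIntegrand, norm_mul, norm_of_nonneg (by positivity), mul_comm C]
  exact mul_le_mul_of_nonneg_left (hC _ (mapsTo_sq_div_Ioi ht hu)) (by positivity)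

lemma integrableOn_subordinationIntegrand_of_bounded {f : ℝ → ℝ} (hf : ContinuousOn f (Ioi 0))
    {C : ℝ} (hC : ∀ s > 0, |f s| ≤ C) {t : ℝ} (ht : t ≠ 0) :
    IntegrableOn (subordinationIntegrand f t) (Ioi 0) :=
  (integrableOn_exp_neg_div_sqrt.const_mul C).mono'
    ((continuousOn_subordinationIntegrand hf ht).aestronglyMeasurable measurableSet_Ioi)
    ((ae_restrict_mem measurableSet_Ioi).mono fun _ hu => norm_subordinationIntegrand_le hC ht hu)

lemma tendsto_subordinationIntegral_zero {f : ℝ → ℝ} (hf : ContinuousOn f (Ioi 0))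
    {C : ℝ} (hC : ∀ s > 0, |f s| ≤ C) (hf0 : Tendsto f (𝓝[>] 0) (𝓝 0)) :
    Tendsto (subordinationIntegral f) (𝓝[>] 0) (𝓝 0) := by
  have hlim : ∀ u ∈ Ioi (0 : ℝ),
      Tendsto (fun t => subordinationIntegrand f t u) (𝓝[>] 0) (𝓝 0) := by
    intro u hu
    have hs : Tendsto (fun t : ℝ => t ^ 2 / (4 * u)) (𝓝[>] 0) (𝓝[>] 0) :=
      tendsto_nhdsWithin_of_tendsto_nhds_of_eventually_within _
        ((Continuous.tendsto' (by fun_prop) 0 0 (by simp)).mono_left nhdsWithin_le_nhds)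
        (eventually_nhdsWithin_of_forall fun t ht => mapsTo_sq_div_Ioi (ne_of_gt ht) hu)
    have h := (hf0.comp hs).const_mul (exp (-u) / √u)
    rwa [mul_zero] at h
  have h := tendsto_integral_filter_of_dominated_convergence (l := 𝓝[>] (0 : ℝ)) _
    (eventually_nhdsWithin_of_forall fun t ht =>
      (continuousOn_subordinationIntegrand hf (ne_of_gt ht)).aestronglyMeasurable
        measurableSet_Ioi)
    (eventually_nhdsWithin_of_forall fun t ht => (ae_restrict_mem measurableSet_Ioi).mono
      fun _ hu => norm_subordinationIntegrand_le hC (ne_of_gt ht) hu)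
    (integrableOn_exp_neg_div_sqrt.const_mul C)
    ((ae_restrict_mem measurableSet_Ioi).mono hlim)
  rwa [integral_zero] at h

lemma subordinationIntegral_sub {f g : ℝ → ℝ} {t : ℝ}
    (hf : IntegrableOn (subordinationIntegrand f t) (Ioi 0))
    (hg : IntegrableOn (subordinationIntegrand g t) (Ioi 0)) :
    subordinationIntegral (fun s => f s - g s) t =
      subordinationIntegral f t - subordinationIntegral g t := by
  simp only [subordinationIntegral, subordinationIntegrand, mul_sub]
  exact integral_sub hf hg

lemma continuousOn_tsum_exp_neg_mul {a : ℕ → ℝ} (ha : ∀ j, 0 ≤ a j)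
    (hsum : ∀ s > 0, Summable fun j => exp (-s * a j)) :
    ContinuousOn (fun s => ∑' j, exp (-s * a j)) (Ioi 0) := by
  intro s hs
  refine (continuousOn_tsum (fun j => by fun_prop) (hsum _ (half_pos hs)) fun j r hr => ?_)
    |>.continuousAt (Ioi_mem_nhds (half_lt_self hs)) |>.continuousWithinAt
  rw [norm_of_nonneg (exp_pos _).le, exp_le_exp]
  exact mul_le_mul_of_nonneg_right (neg_le_neg (le_of_lt hr)) (ha j)

lemma hasSum_subordinationIntegral_tsum_exp_neg_mul {a : ℕ → ℝ} (ha : ∀ j, 0 ≤ a j)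
    (hsum : ∀ s > 0, Summable fun j => exp (-s * a j)) {t : ℝ} (ht : 0 < t)
    (hint : IntegrableOn (subordinationIntegrand (fun s => ∑' j, exp (-s * a j)) t) (Ioi 0)) :
    HasSum (fun j => √π * exp (-t * √(a j)))
      (subordinationIntegral (fun s => ∑' j, exp (-s * a j)) t) := by
  set F : ℕ → ℝ → ℝ := fun j => subordinationIntegrand (fun s => exp (-s * a j)) t
  have hF_nonneg : ∀ j, ∀ u ∈ Ioi (0 : ℝ), 0 ≤ F j u := fun j u hu => by
    have : 0 < u := hu
    simp only [F, subordinationIntegrand]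
    positivity
  have hF_sum : ∀ u ∈ Ioi (0 : ℝ),
      HasSum (F · u) (subordinationIntegrand (fun s => ∑' j, exp (-s * a j)) t u) :=
    fun u hu => (hsum _ (mapsTo_sq_div_Ioi ht.ne' hu)).hasSum.mul_left _
  simp only [← subordinationIntegral_exp_neg_mul (ha _) ht.le]
  exact hasSum_integral_of_dominated_convergence F
    (fun j => (continuousOn_subordinationIntegrand (by fun_prop) ht.ne').aestronglyMeasurable
      measurableSet_Ioi)
    (fun j => (ae_restrict_mem measurableSet_Ioi).mono fun u hu =>
      (norm_of_nonneg (hF_nonneg j u hu)).le)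
    ((ae_restrict_mem measurableSet_Ioi).mono fun u hu => (hF_sum u hu).summable)
    (hint.congr_fun (fun u hu => (hF_sum u hu).tsum_eq.symm) measurableSet_Ioi)
    ((ae_restrict_mem measurableSet_Ioi).mono hF_sum)

theorem stmt2_general (m : ℕ) (a : ℕ → ℝ) (ha : ∀ j, 0 ≤ a j)
    (hsum : ∀ t : ℝ, 0 < t → Summable fun j => Real.exp (-t * a j))
    (c : ℕ → ℝ)
    (hBbdd : ∃ C : ℝ, ∀ t : ℝ, 0 < t →
      |(∑' j, Real.exp (-t * a j)) -
          ∑ k ∈ Finset.range (m / 2 + 1), c k * t ^ ((k : ℝ) - (m : ℝ) / 2)| ≤ C)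
    (hB0 : Tendsto
      (fun t : ℝ => (∑' j, Real.exp (-t * a j)) -
          ∑ k ∈ Finset.range (m / 2 + 1), c k * t ^ ((k : ℝ) - (m : ℝ) / 2))
      (nhdsWithin 0 (Set.Ioi 0)) (nhds 0)) :
    (∀ t : ℝ, 0 < t → Summable fun j => Real.exp (-t * Real.sqrt (a j))) ∧
      Tendsto
        (fun t : ℝ => (∑' j, Real.exp (-t * Real.sqrt (a j))) -
            ∑ k ∈ Finset.range (m / 2 + 1),
              (2 : ℝ) ^ ((m : ℝ) - 2 * k) / Real.sqrt Real.pi *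
                Real.Gamma (((m : ℝ) - 2 * k + 1) / 2) * c k * t ^ (2 * (k : ℝ) - m))
        (nhdsWithin 0 (Set.Ioi 0)) (nhds 0) := by
  obtain ⟨C, hC⟩ := hBbdd
  set θ : ℝ → ℝ := fun s => ∑' j, exp (-s * a j)
  set P : ℝ → ℝ := fun s => ∑ k ∈ Finset.range (m / 2 + 1), c k * s ^ ((k : ℝ) - m / 2)
  have hP : ∀ t > 0, IntegrableOn (subordinationIntegrand P t) (Ioi 0) := fun t ht =>
    integrableOn_subordinationIntegrand_sum_rpow c (fun k hk => natCast_sub_half_lt_half hk) ht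
  have hB : ContinuousOn (fun s => θ s - P s) (Ioi 0) :=
    (continuousOn_tsum_exp_neg_mul ha hsum).sub (continuousOn_finsetSum _ fun k _ =>
      continuousOn_const.mul (continuousOn_id.rpow_const fun s hs => Or.inl (ne_of_gt hs)))
  have hθ : ∀ t > 0, IntegrableOn (subordinationIntegrand θ t) (Ioi 0) := fun t ht =>
    ((integrableOn_subordinationIntegrand_of_bounded hB hC ht.ne').add (hP t ht)).congr_fun
      (fun u _ => by simp only [subordinationIntegrand, Pi.add_apply, ← mul_add, sub_add_cancel])
      measurableSet_Ioi
  have hpoisson := fun t (ht : 0 < t) =>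
    hasSum_subordinationIntegral_tsum_exp_neg_mul ha hsum ht (hθ t ht)
  refine ⟨fun t ht => (summable_mul_left_iff (by positivity)).mp (hpoisson t ht).summable, ?_⟩
  have hlim := (tendsto_subordinationIntegral_zero hB hC hB0).const_mul (√π)⁻¹
  rw [mul_zero] at hlim
  refine hlim.congr' (eventually_nhdsWithin_of_forall fun t ht => ?_)
  rw [subordinationIntegral_sub (hθ t ht) (hP t ht), ← (hpoisson t ht).tsum_eq, tsum_mul_left,
    subordinationIntegral_sum_rpow_sub_half m c ht, ← mul_sub, inv_mul_cancel_left₀ (by positivity)]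

/-- small-time development of the Poisson trace from that of the heat trace.
If `∑_j e^{-t a_j}` has the development `∑_{k=0}^{⌊m/2⌋} c_k t^{k - m/2} + B(t)` with `B`
bounded on `(0,∞)` and `B(t) → 0` as `t → 0⁺`, then `∑_j e^{-t √(a_j)}` converges for all
`t > 0` and has the development
`∑_{k=0}^{⌊m/2⌋} (2^{m-2k}/√π) Γ((m-2k+1)/2) c_k t^{2k-m} + o(1)` as `t → 0⁺`. -/
theorem stmt2 (m : ℕ) (hm : 1 ≤ m) (a : ℕ → ℝ) (ha : ∀ j, 0 ≤ a j)
    (hsum : ∀ t : ℝ, 0 < t → Summable fun j => Real.exp (-t * a j))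
    (c : ℕ → ℝ)
    (hBbdd : ∃ C : ℝ, ∀ t : ℝ, 0 < t →
      |(∑' j, Real.exp (-t * a j)) -
          ∑ k ∈ Finset.range (m / 2 + 1), c k * t ^ ((k : ℝ) - (m : ℝ) / 2)| ≤ C)
    (hB0 : Tendsto
      (fun t : ℝ => (∑' j, Real.exp (-t * a j)) -
          ∑ k ∈ Finset.range (m / 2 + 1), c k * t ^ ((k : ℝ) - (m : ℝ) / 2))
      (nhdsWithin 0 (Set.Ioi 0)) (nhds 0)) :
    (∀ t : ℝ, 0 < t → Summable fun j => Real.exp (-t * Real.sqrt (a j))) ∧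
      Tendsto
        (fun t : ℝ => (∑' j, Real.exp (-t * Real.sqrt (a j))) -
            ∑ k ∈ Finset.range (m / 2 + 1),
              (2 : ℝ) ^ ((m : ℝ) - 2 * k) / Real.sqrt Real.pi *
                Real.Gamma (((m : ℝ) - 2 * k + 1) / 2) * c k * t ^ (2 * (k : ℝ) - m))
        (nhdsWithin 0 (Set.Ioi 0)) (nhds 0) :=
  stmt2_general m a ha hsum c hBbdd hB0
end

section
/- Let (ℓ_j)_{j∈ℕ} be positive reals and (w_j)_{j∈ℕ} complex numbers such that Σ_j |w_j|·ℓ_j^{σ} < ∞ for every real σ < −1. Then for every real s < 0: (i) for each t > 0 the series Σ_j |w_j|·e^{−ℓ_j²/(4t)} converges; (ii) the function t ↦ t^{s−1}·(πt)^{−1/2}·Σ_j w_j·e^{−ℓ_j²/(4t)} is Lebesgue integrable on (0,∞); and (iii) ∫_0^∞ t^{s−1}·(πt)^{−1/2}·(Σ_j w_j·e^{−ℓ_j²/(4t)}) dt = (2^{1−2s}/√π)·Γ(1/2 − s)·Σ_j w_j·ℓ_j^{2s−1}, the last series converging absolutely. -/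
/-!
Substituting `t ↦ 1/t` turns the Mellin integral of a single theta term into a Gamma integral:
`∫₀^∞ t^{s-3/2} e^{-c/t} dt = c^{s-1/2} Γ(1/2 - s)` with `c = ℓ²/4`, which produces the factor
`2^{1-2s} ℓ^{2s-1}`. Each term of the theta series is `w_j` times a nonnegative kernel, so the
integrals of the norms of the terms are `|w_j|` times these values; the hypothesis at
`σ = 2s - 1 < -1` makes them summable, which justifies exchanging sum and integral. Convergence of
the theta series itself follows from `e^{-x} ≤ 1/x` and the hypothesis at `σ = -2`.
-/

open MeasureTheory Set Filter Real

section Interchange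

variable {α E : Type*} [MeasurableSpace α] {μ : Measure α}
  [NormedAddCommGroup E] [CompleteSpace E]

theorem integrable_tsum_of_summable_integral_norm {F : ℕ → α → E}
    (hF_int : ∀ i, Integrable (F i) μ) (hF_sum : Summable fun i ↦ ∫ a, ‖F i a‖ ∂μ) :
    Integrable (fun a ↦ ∑' i, F i a) μ := by
  have hF_meas : ∀ i, AEMeasurable (fun a ↦ ‖F i a‖ₑ) μ := fun i ↦ (hF_int i).1.enorm
  have h_lintegral : ∫⁻ a, ∑' i, ‖F i a‖ₑ ∂μ ≠ ⊤ := by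
    rw [lintegral_tsum hF_meas,
      ← tsum_congr fun i ↦ ofReal_integral_norm_eq_lintegral_enorm (hF_int i),
      ← ENNReal.ofReal_tsum_of_nonneg (fun i ↦ integral_nonneg fun a ↦ norm_nonneg _) hF_sum]
    exact ENNReal.ofReal_ne_top
  have h_summable : ∀ᵐ a ∂μ, Summable fun i ↦ F i a := by
    filter_upwards [ae_lt_top' (AEMeasurable.tsum hF_meas) h_lintegral] with a ha
    exact .of_norm <| NNReal.summable_coe.mpr <| ENNReal.tsum_coe_ne_top_iff_summable.mp ha.ne
  refine ⟨aestronglyMeasurable_of_tendsto_ae atTop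
    (fun n ↦ Finset.aestronglyMeasurable_sum (Finset.range n) fun i _ ↦ (hF_int i).1) ?_, ?_⟩
  · filter_upwards [h_summable] with a ha
    simpa only [Finset.sum_apply] using ha.hasSum.tendsto_sum_nat
  · exact (lintegral_mono fun a ↦ enorm_tsum_le_tsum_enorm).trans_lt h_lintegral.lt_top

end Interchange

section WeightedSeries

variable {α : Type*} [MeasurableSpace α] {μ : Measure α} {w : ℕ → ℂ} {K : ℕ → α → ℝ}

theorem summable_integral_norm_mul_ofReal (hK_nonneg : ∀ i, 0 ≤ᵐ[μ] K i)
    (hsum : Summable fun i ↦ ‖w i‖ * ∫ a, K i a ∂μ) :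
    Summable fun i ↦ ∫ a, ‖w i * (K i a : ℂ)‖ ∂μ := by
  refine hsum.congr fun i ↦ ?_
  rw [← integral_const_mul]
  refine integral_congr_ae ?_
  filter_upwards [hK_nonneg i] with a ha
  rw [norm_mul, Complex.norm_real, Real.norm_of_nonneg ha]

theorem integrable_tsum_mul_ofReal (hK_nonneg : ∀ i, 0 ≤ᵐ[μ] K i)
    (hK_int : ∀ i, Integrable (K i) μ) (hsum : Summable fun i ↦ ‖w i‖ * ∫ a, K i a ∂μ) :
    Integrable (fun a ↦ ∑' i, w i * (K i a : ℂ)) μ :=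
  integrable_tsum_of_summable_integral_norm (fun i ↦ (hK_int i).ofReal.const_mul (w i))
    (summable_integral_norm_mul_ofReal hK_nonneg hsum)

theorem hasSum_integral_tsum_mul_ofReal (hK_nonneg : ∀ i, 0 ≤ᵐ[μ] K i)
    (hK_int : ∀ i, Integrable (K i) μ) (hsum : Summable fun i ↦ ‖w i‖ * ∫ a, K i a ∂μ) :
    HasSum (fun i ↦ w i * (∫ a, K i a ∂μ : ℝ)) (∫ a, ∑' i, w i * (K i a : ℂ) ∂μ) := by
  have h := hasSum_integral_of_summable_integral_norm
    (fun i ↦ (hK_int i).ofReal.const_mul (w i)) (summable_integral_norm_mul_ofReal hK_nonneg hsum)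
  simp only [integral_const_mul, integral_ofReal] at h
  exact h

end WeightedSeries

theorem rpow_mul_exp_neg_div_eq_comp_inv {b c t : ℝ} (ht : 0 < t) :
    t ^ b * exp (-c / t) =
      t ^ ((-1 : ℝ) - 1) * ((t ^ (-1 : ℝ)) ^ (-b - 2) * exp (-(c * t ^ (-1 : ℝ)))) := by
  rw [← rpow_mul ht.le, ← mul_assoc, ← rpow_add ht, rpow_neg_one, neg_div, div_eq_mul_inv]
  ring_nf

theorem integrableOn_rpow_mul_exp_neg_div {b c : ℝ} (hb : b < -1) (hc : 0 < c) :
    IntegrableOn (fun t ↦ t ^ b * exp (-c / t)) (Ioi 0) := by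
  have h := integrableOn_rpow_mul_exp_neg_mul_rpow (s := -b - 2) (by linarith) one_pos hc
  simp only [rpow_one, neg_mul] at h
  refine ((integrableOn_Ioi_comp_rpow_iff' _ (p := -1) (by norm_num)).mpr h).congr_fun
    (fun t ht ↦ (rpow_mul_exp_neg_div_eq_comp_inv ht).symm) measurableSet_Ioi

theorem integral_rpow_mul_exp_neg_div {b c : ℝ} (hb : b < -1) (hc : 0 < c) :
    ∫ t in Ioi 0, t ^ b * exp (-c / t) = c ^ (b + 1) * Gamma (-b - 1) := by
  have h := integral_comp_rpow_Ioi (fun u ↦ u ^ (-b - 2) * exp (-(c * u))) (p := -1) (by norm_num)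
  have hΓ := integral_rpow_mul_exp_neg_mul_Ioi (a := -b - 1) (by linarith) hc
  rw [show -b - 1 - 1 = -b - 2 by ring] at hΓ
  rw [setIntegral_congr_fun measurableSet_Ioi fun t ht ↦ rpow_mul_exp_neg_div_eq_comp_inv ht]
  simp only [smul_eq_mul, abs_neg, abs_one, one_mul] at h
  rw [h, hΓ, one_div, ← rpow_neg_one, ← rpow_mul hc.le]
  ring_nf

noncomputable def thetaMellinIntegrand (s ℓ t : ℝ) : ℝ :=
  t ^ (s - 1) * (π * t) ^ (-(1 : ℝ) / 2) * exp (-ℓ ^ 2 / (4 * t))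

section ThetaMellinIntegrand

variable {s ℓ t : ℝ}

theorem thetaMellinIntegrand_nonneg (ht : 0 < t) : 0 ≤ thetaMellinIntegrand s ℓ t := by
  unfold thetaMellinIntegrand; positivity

theorem thetaMellinIntegrand_eq (ht : 0 < t) :
    thetaMellinIntegrand s ℓ t =
      π ^ (-(1 : ℝ) / 2) * (t ^ (s - 3 / 2) * exp (-(ℓ ^ 2 / 4) / t)) := by
  rw [thetaMellinIntegrand, mul_rpow pi_pos.le ht.le, ← neg_div, div_div,
    show s - 3 / 2 = (s - 1) + -(1 : ℝ) / 2 by ring, rpow_add ht]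
  ring

theorem integrableOn_thetaMellinIntegrand (hs : s < 1 / 2) (hℓ : ℓ ≠ 0) :
    IntegrableOn (thetaMellinIntegrand s ℓ) (Ioi 0) := by
  refine IntegrableOn.congr_fun ?_ (fun _ ht ↦ (thetaMellinIntegrand_eq ht).symm)
    measurableSet_Ioi
  exact (integrableOn_rpow_mul_exp_neg_div (by linarith) (by positivity)).const_mul _

theorem integral_thetaMellinIntegrand (hs : s < 1 / 2) (hℓ : 0 < ℓ) :
    ∫ t in Ioi 0, thetaMellinIntegrand s ℓ t =
      2 ^ (1 - 2 * s) / √π * Gamma (1 / 2 - s) * ℓ ^ (2 * s - 1) := by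
  have hpow : (ℓ ^ 2 / 4) ^ (s - 1 / 2) = 2 ^ (1 - 2 * s) * ℓ ^ (2 * s - 1) := by
    rw [show ℓ ^ 2 / 4 = (ℓ / 2) ^ (2 : ℝ) by norm_num [div_pow], ← rpow_mul (by positivity),
      div_rpow hℓ.le zero_le_two, div_eq_mul_inv, ← rpow_neg zero_le_two]
    ring_nf
  have hπ : π ^ (-(1 : ℝ) / 2) = (√π)⁻¹ := by
    rw [sqrt_eq_rpow, ← rpow_neg pi_pos.le]
    norm_num
  rw [setIntegral_congr_fun measurableSet_Ioi fun _ ht ↦ thetaMellinIntegrand_eq ht,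
    integral_const_mul, integral_rpow_mul_exp_neg_div (by linarith) (by positivity),
    show s - 3 / 2 + 1 = s - 1 / 2 by ring, show -(s - 3 / 2) - 1 = 1 / 2 - s by ring, hpow, hπ]
  ring

end ThetaMellinIntegrand

theorem exp_neg_le_inv {x : ℝ} (hx : 0 < x) : exp (-x) ≤ x⁻¹ := by
  rw [exp_neg]
  exact inv_anti₀ hx ((le_add_of_nonneg_right zero_le_one).trans (add_one_le_exp x))

theorem summable_norm_mul_exp_neg_sq_div {E : Type*} [SeminormedAddCommGroup E] {w : ℕ → E}
    {ℓ : ℕ → ℝ} (hℓ : ∀ j, 0 < ℓ j) (hsum : Summable fun j ↦ ‖w j‖ * ℓ j ^ (-2 : ℝ))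
    {t : ℝ} (ht : 0 < t) : Summable fun j ↦ ‖w j‖ * exp (-ℓ j ^ 2 / (4 * t)) := by
  refine (hsum.mul_left (4 * t)).of_nonneg_of_le (fun j ↦ by positivity) fun j ↦ ?_
  calc ‖w j‖ * exp (-ℓ j ^ 2 / (4 * t))
      ≤ ‖w j‖ * (ℓ j ^ 2 / (4 * t))⁻¹ := by
        rw [neg_div]
        gcongr
        exact exp_neg_le_inv (by have := hℓ j; positivity)
    _ = 4 * t * (‖w j‖ * ℓ j ^ (-2 : ℝ)) := by
        rw [rpow_neg (hℓ j).le, inv_div, show (2 : ℝ) = (2 : ℕ) by norm_num, rpow_natCast]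
        ring

/-- equation (68) of the paper: Mellin transform of the dynamical theta
function.  If `ℓ_j > 0` and `∑_j |w_j| ℓ_j^σ < ∞` for every `σ < -1`, then for every real
`s < 0` the theta series converges, the function
`t ↦ t^{s-1} (πt)^{-1/2} ∑_j w_j e^{-ℓ_j²/(4t)}` is integrable on `(0,∞)`, and its
integral equals `(2^{1-2s}/√π) Γ(1/2-s) ∑_j w_j ℓ_j^{2s-1}`, the last series converging
absolutely. -/
theorem stmt11 (ℓ : ℕ → ℝ) (hℓ : ∀ j, 0 < ℓ j) (w : ℕ → ℂ)
    (hsum : ∀ σ : ℝ, σ < -1 → Summable fun j => ‖w j‖ * ℓ j ^ σ)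
    (s : ℝ) (hs : s < 0) :
    (∀ t : ℝ, 0 < t → Summable fun j => ‖w j‖ * Real.exp (-ℓ j ^ 2 / (4 * t))) ∧
    IntegrableOn
      (fun t : ℝ =>
        ((t ^ (s - 1) * (Real.pi * t) ^ (-(1 : ℝ) / 2) : ℝ) : ℂ) *
          ∑' j, w j * (Real.exp (-ℓ j ^ 2 / (4 * t)) : ℂ))
      (Set.Ioi 0) ∧
    (Summable fun j => ‖w j‖ * ℓ j ^ (2 * s - 1)) ∧
    ∫ t in Set.Ioi (0 : ℝ),
        ((t ^ (s - 1) * (Real.pi * t) ^ (-(1 : ℝ) / 2) : ℝ) : ℂ) *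
          ∑' j, w j * (Real.exp (-ℓ j ^ 2 / (4 * t)) : ℂ) =
      (((2 : ℝ) ^ (1 - 2 * s) / Real.sqrt Real.pi * Real.Gamma (1 / 2 - s) : ℝ) : ℂ) *
        ∑' j, w j * ((ℓ j ^ (2 * s - 1) : ℝ) : ℂ) := by
  have hs' : s < 1 / 2 := by linarith
  have hzeta := hsum (2 * s - 1) (by linarith)
  have hθ : (fun t : ℝ ↦ ((t ^ (s - 1) * (π * t) ^ (-(1 : ℝ) / 2) : ℝ) : ℂ) *
      ∑' j, w j * (exp (-ℓ j ^ 2 / (4 * t)) : ℂ)) =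
      fun t ↦ ∑' j, w j * (thetaMellinIntegrand s (ℓ j) t : ℂ) := by
    ext t
    rw [← tsum_mul_left]
    refine tsum_congr fun j ↦ ?_
    simp only [thetaMellinIntegrand, Complex.ofReal_mul]
    ring
  have hK_nonneg (j : ℕ) : 0 ≤ᵐ[volume.restrict (Ioi 0)] thetaMellinIntegrand s (ℓ j) :=
    (ae_restrict_mem measurableSet_Ioi).mono fun _ ht ↦ thetaMellinIntegrand_nonneg ht
  have hK_int (j : ℕ) := integrableOn_thetaMellinIntegrand hs' (hℓ j).ne'
  have hK_sum : Summable fun j ↦ ‖w j‖ * ∫ t in Ioi 0, thetaMellinIntegrand s (ℓ j) t := by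
    simp_rw [integral_thetaMellinIntegrand hs' (hℓ _)]
    exact (hzeta.mul_left (2 ^ (1 - 2 * s) / √π * Gamma (1 / 2 - s))).congr fun j ↦ by ring
  refine ⟨fun t ↦ summable_norm_mul_exp_neg_sq_div hℓ (hsum (-2) (by norm_num)), ?_, hzeta, ?_⟩
  · rw [hθ]
    exact integrable_tsum_mul_ofReal hK_nonneg hK_int hK_sum
  · rw [hθ, ← (hasSum_integral_tsum_mul_ofReal hK_nonneg hK_int hK_sum).tsum_eq, ← tsum_mul_left]
    refine tsum_congr fun j ↦ ?_
    rw [integral_thetaMellinIntegrand hs' (hℓ j)]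
    push_cast
    ring
end

section
/- Let d be a positive integer, χ* an integer, I a finite index set, and for each i ∈ I let α_i be a positive integer. Let x ∈ (0,1), and for each i ∈ I and j ∈ {1,…,d} let x_{i,j} ∈ (0,1) satisfy α_i·x_{i,j} − x ∈ ℤ. Then for every s ∈ ℂ with Re(s) < 0 and s ∉ ℤ: Γ(s)·cos(πs/2)·[ d·χ*·(ζ(s,x) + ζ(s,1−x)) + Σ_{i∈I} Σ_{j=1}^{d} α_i^{−s}·(ζ(s,x_{i,j}) + ζ(s,1−x_{i,j})) ] = Σ_{n=1}^{∞} (χ* + Σ_{i∈I} 1/α_i)·d·cos(2πnx)·(2πn)^s/n + Σ_{i∈I} Σ_{n≥1, α_i ∤ n} (Σ_{j=1}^{d} cos(2πn·x_{i,j}))·(2πn/α_i)^s / n, where all series converge absolutely. -/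
/-!
For `Re s < 0` the series `∑ cos (2πna) (2πn)^s / n` converges absolutely to
`(2π)^s cosZeta a (1 - s)`, and the functional equation of the even Hurwitz zeta function turns
this into `Γ(s) cos(πs/2) (ζ(s,a) + ζ(s,1-a))`. For an exceptional orbit the full series over
all `n` is `α^{-s}` times the series at the `x_{i,j}`; since `α x_{i,j} ≡ x mod 1`, its terms
with `α ∣ n` add up to `d / α` times the generic series at `x`, and subtracting them leaves the
stated sum over `α ∤ n`.
-/

open HurwitzZeta Real

section

variable {s : ℂ}

lemma hasSum_cos_mul_cpow_div_add_one (a : ℝ) (hs : s.re < 0) :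
    HasSum (fun n : ℕ => (Real.cos (2 * π * (n + 1) * a) : ℂ) *
        ((2 * π * (n + 1) : ℝ) : ℂ) ^ s / ((n : ℂ) + 1))
      ((2 * π : ℂ) ^ s * cosZeta a (1 - s)) := by
  have hs' : 1 < (1 - s).re := by simp only [Complex.sub_re, Complex.one_re]; linarith
  have H := (hasSum_nat_add_iff' 1).mpr ((hasSum_nat_cosZeta a hs').mul_left ((2 * π : ℂ) ^ s))
  simp only [Finset.sum_range_one, Nat.cast_zero,
    Complex.zero_cpow (Complex.ne_zero_of_one_lt_re hs'), div_zero, mul_zero, sub_zero] at H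
  refine H.congr_fun fun n => ?_
  have hn : (n : ℂ) + 1 ≠ 0 := Nat.cast_add_one_ne_zero n
  rw [Complex.cpow_sub _ _ (by exact_mod_cast hn), Complex.cpow_one, Complex.ofReal_mul,
    Complex.mul_cpow_ofReal_nonneg (by positivity) (by positivity)]
  push_cast
  field_simp

lemma hasSum_ofReal_mul_cos_mul_cpow_div_add_one (c a : ℝ) (hs : s.re < 0) :
    HasSum (fun n : ℕ => ((c * Real.cos (2 * π * (n + 1) * a) : ℝ) : ℂ) *
        (2 * π * ((n : ℝ) + 1) : ℂ) ^ s / ((n : ℂ) + 1))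
      (c * ((2 * π : ℂ) ^ s * cosZeta a (1 - s))) :=
  ((hasSum_cos_mul_cpow_div_add_one a hs).mul_left (c : ℂ)).congr_fun fun n => by
    push_cast; ring

lemma Gamma_mul_cos_mul_hurwitzZeta_add_hurwitzZeta_one_sub (a : ℝ)
    (hs : ∀ n : ℤ, s ≠ n) :
    Complex.Gamma s * Complex.cos (π * s / 2) *
        (hurwitzZeta a s + hurwitzZeta ((1 - a : ℝ) : UnitAddCircle) s) =
      (2 * π : ℂ) ^ s * cosZeta a (1 - s) := by
  have h_neg : ((1 - a : ℝ) : UnitAddCircle) = -(a : UnitAddCircle) := by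
    rw [sub_eq_neg_add, AddCircle.coe_add_period, AddCircle.coe_neg]
  have h_ne : (2 * π : ℂ) ^ s ≠ 0 := by
    simp [Complex.cpow_eq_zero_iff, Real.pi_ne_zero]
  rw [h_neg, cosZeta_one_sub _ fun n => by simpa using hs (1 - n), hurwitzZetaEven_eq,
    Complex.cpow_neg]
  field_simp

lemma ofReal_div_natCast_cpow {r : ℝ} (hr : 0 ≤ r) (α : ℕ) (s : ℂ) :
    ((r / α : ℝ) : ℂ) ^ s = (α : ℂ) ^ (-s) * (r : ℂ) ^ s := by
  rw [Complex.ofReal_div, Complex.div_cpow_ofReal_nonneg hr α.cast_nonneg, Complex.cpow_neg,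
    Complex.ofReal_natCast, div_eq_inv_mul]

lemma cos_two_pi_mul_natCast_mul_eq {x y : ℝ} {k : ℤ} (h : y - x = k) (n : ℕ) :
    Real.cos (2 * π * n * y) = Real.cos (2 * π * n * x) := by
  rw [show 2 * π * n * y = 2 * π * n * x + ((k * n : ℤ) : ℝ) * (2 * π) by
    push_cast; linear_combination (2 * π * n) * h, Real.cos_add_int_mul_two_pi]

lemma hasSum_ite_dvd_add_one_iff {M : Type*} [AddCommMonoid M] [TopologicalSpace M]
    {α : ℕ} (hα : 0 < α) (f : ℕ → M) (a : M) :
    HasSum (fun n => if α ∣ n + 1 then f n else 0) a ↔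
      HasSum (fun m => f (α * (m + 1) - 1)) a := by
  have h_inj : Function.Injective fun m => α * (m + 1) - 1 := by
    intro m m' h
    have h₁ : 0 < α * (m + 1) := Nat.mul_pos hα m.succ_pos
    have h₂ : 0 < α * (m' + 1) := Nat.mul_pos hα m'.succ_pos
    have := Nat.eq_of_mul_eq_mul_left hα (show α * (m + 1) = α * (m' + 1) by simp only at h; omega)
    omega
  have h_dvd (m : ℕ) : α ∣ α * (m + 1) - 1 + 1 := by
    rw [Nat.sub_add_cancel (Nat.mul_pos hα m.succ_pos)]
    exact dvd_mul_right α _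
  rw [← h_inj.hasSum_iff]
  · simp only [Function.comp_def, h_dvd, if_true]
  · intro n hn
    rw [if_neg]
    rintro ⟨t, ht⟩
    obtain _ | t := t
    · omega
    · exact hn ⟨t, by simp only; omega⟩

variable {J : Type*} [Fintype J]

lemma hasSum_sum_cos_mul_cpow_div_add_one (α : ℕ) (X : J → ℝ) (hs : s.re < 0) :
    HasSum (fun n : ℕ => ((∑ j, Real.cos (2 * π * (n + 1) * X j) : ℝ) : ℂ) *
        ((2 * π * ((n : ℝ) + 1) / α : ℝ) : ℂ) ^ s / ((n : ℂ) + 1))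
      (∑ j, (α : ℂ) ^ (-s) * ((2 * π : ℂ) ^ s * cosZeta (X j) (1 - s))) := by
  refine (hasSum_sum fun j _ =>
    (hasSum_cos_mul_cpow_div_add_one (X j) hs).mul_left ((α : ℂ) ^ (-s))).congr_fun fun n => ?_
  rw [ofReal_div_natCast_cpow (by positivity), Complex.ofReal_sum, Finset.sum_mul, Finset.sum_div]
  exact Finset.sum_congr rfl fun j _ => by ring

lemma hasSum_ite_dvd_sum_cos_mul_cpow_div_add_one {α : ℕ} (hα : 0 < α) {X : J → ℝ} {x : ℝ}
    (hX : ∀ j, ∃ k : ℤ, (α : ℝ) * X j - x = k) (hs : s.re < 0) :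
    HasSum (fun n : ℕ => if α ∣ n + 1 then
        ((∑ j, Real.cos (2 * π * (n + 1) * X j) : ℝ) : ℂ) *
          ((2 * π * ((n : ℝ) + 1) / α : ℝ) : ℂ) ^ s / ((n : ℂ) + 1) else 0)
      (Fintype.card J / α * ((2 * π : ℂ) ^ s * cosZeta x (1 - s))) := by
  rw [hasSum_ite_dvd_add_one_iff hα]
  refine ((hasSum_cos_mul_cpow_div_add_one x hs).mul_left (Fintype.card J / α : ℂ)).congr_fun
    fun m => ?_
  have h_succ : ((α * (m + 1) - 1 : ℕ) : ℝ) + 1 = α * (m + 1) := by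
    rw [← Nat.cast_add_one, Nat.sub_add_cancel (Nat.mul_pos hα m.succ_pos)]
    push_cast; ring
  have h_cos (j : J) : Real.cos (2 * π * (((α * (m + 1) - 1 : ℕ) : ℝ) + 1) * X j) =
      Real.cos (2 * π * (m + 1) * x) := by
    obtain ⟨k, hk⟩ := hX j
    rw [h_succ, show 2 * π * (α * (m + 1)) * X j = 2 * π * ((m + 1 : ℕ) : ℝ) * (α * X j) by
      push_cast; ring, cos_two_pi_mul_natCast_mul_eq hk]
    push_cast; rfl
  have hα' : (α : ℝ) ≠ 0 := by exact_mod_cast hα.ne'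
  have h_base : 2 * π * (((α * (m + 1) - 1 : ℕ) : ℝ) + 1) / α = 2 * π * (m + 1) := by
    rw [h_succ]; field_simp
  have h_succℂ : ((α * (m + 1) - 1 : ℕ) : ℂ) + 1 = α * (m + 1) := by exact_mod_cast h_succ
  simp only [h_cos, h_base, h_succℂ, Finset.sum_const, Finset.card_univ, nsmul_eq_mul]
  push_cast
  field_simp

lemma hasSum_ite_dvd_zero_sum_cos_mul_cpow_div_add_one {α : ℕ} (hα : 0 < α) {X : J → ℝ}
    {x : ℝ} (hX : ∀ j, ∃ k : ℤ, (α : ℝ) * X j - x = k) (hs : s.re < 0) :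
    HasSum (fun n : ℕ => if α ∣ n + 1 then 0 else
        ((∑ j, Real.cos (2 * π * (n + 1) * X j) : ℝ) : ℂ) *
          ((2 * π * ((n : ℝ) + 1) / α : ℝ) : ℂ) ^ s / ((n : ℂ) + 1))
      (∑ j, (α : ℂ) ^ (-s) * ((2 * π : ℂ) ^ s * cosZeta (X j) (1 - s)) -
        Fintype.card J / α * ((2 * π : ℂ) ^ s * cosZeta x (1 - s))) := by
  refine ((hasSum_sum_cos_mul_cpow_div_add_one α X hs).sub
    (hasSum_ite_dvd_sum_cos_mul_cpow_div_add_one hα hX hs)).congr_fun fun n => ?_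
  split_ifs <;> simp

end

theorem stmt14_general (d : ℕ) (χstar : ℤ) (ι : Type) [Fintype ι]
    (α : ι → ℕ) (hα : ∀ i, 0 < α i)
    (x : ℝ)
    (X : ι → Fin d → ℝ)
    (hXint : ∀ i j, ∃ k : ℤ, (α i : ℝ) * X i j - x = (k : ℝ))
    (s : ℂ) (hs : s.re < 0) (hsz : ∀ n : ℤ, s ≠ (n : ℂ)) :
    (Summable fun n : ℕ =>
      ‖((((χstar : ℝ) + ∑ i, (1 : ℝ) / (α i)) * d *
            Real.cos (2 * Real.pi * (n + 1) * x) : ℝ) : ℂ) *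
          (2 * Real.pi * ((n : ℝ) + 1) : ℂ) ^ s / ((n : ℂ) + 1)‖) ∧
    (∀ i : ι, Summable fun n : ℕ =>
      ‖(if α i ∣ (n + 1) then (0 : ℂ) else
          (((∑ j, Real.cos (2 * Real.pi * (n + 1) * X i j)) : ℝ) : ℂ) *
            ((2 * Real.pi * ((n : ℝ) + 1) / (α i) : ℝ) : ℂ) ^ s / ((n : ℂ) + 1))‖) ∧
    Complex.Gamma s * Complex.cos (Real.pi * s / 2) *
        ((d : ℂ) * (χstar : ℂ) *
            (hurwitzZeta (x : UnitAddCircle) s +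
              hurwitzZeta ((1 - x : ℝ) : UnitAddCircle) s) +
          ∑ i, ∑ j, ((α i : ℕ) : ℂ) ^ (-s) *
            (hurwitzZeta ((X i j : ℝ) : UnitAddCircle) s +
              hurwitzZeta ((1 - X i j : ℝ) : UnitAddCircle) s)) =
      (∑' n : ℕ,
          ((((χstar : ℝ) + ∑ i, (1 : ℝ) / (α i)) * d *
              Real.cos (2 * Real.pi * (n + 1) * x) : ℝ) : ℂ) *
            (2 * Real.pi * ((n : ℝ) + 1) : ℂ) ^ s / ((n : ℂ) + 1)) +
        ∑ i, ∑' n : ℕ,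
          (if α i ∣ (n + 1) then (0 : ℂ) else
            (((∑ j, Real.cos (2 * Real.pi * (n + 1) * X i j)) : ℝ) : ℂ) *
              ((2 * Real.pi * ((n : ℝ) + 1) / (α i) : ℝ) : ℂ) ^ s / ((n : ℂ) + 1)) := by
  have h_main := hasSum_ofReal_mul_cos_mul_cpow_div_add_one
    (((χstar : ℝ) + ∑ i, (1 : ℝ) / α i) * d) x hs
  have h_exc (i : ι) := hasSum_ite_dvd_zero_sum_cos_mul_cpow_div_add_one (hα i) (hXint i) hs
  rw [Fintype.card_fin] at h_exc
  refine ⟨h_main.summable.norm, fun i => (h_exc i).summable.norm, ?_⟩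
  have h_zeta (c : ℂ) (a : ℝ) : Complex.Gamma s * Complex.cos (π * s / 2) *
      (c * (hurwitzZeta a s + hurwitzZeta ((1 - a : ℝ) : UnitAddCircle) s)) =
      c * ((2 * π : ℂ) ^ s * cosZeta a (1 - s)) := by
    rw [mul_left_comm, Gamma_mul_cos_mul_hurwitzZeta_add_hurwitzZeta_one_sub a hsz]
  rw [h_main.tsum_eq, Finset.sum_congr rfl fun i _ => (h_exc i).tsum_eq]
  simp only [mul_add (Complex.Gamma s * _), Finset.mul_sum, h_zeta]
  push_cast
  simp only [Finset.sum_sub_distrib, ← Finset.sum_mul, div_eq_mul_one_div (d : ℂ),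
    ← Finset.mul_sum]
  ring

/-- the computational core of the identification of the contact torsion
function with a dynamical zeta function on a CR Seifert 3-manifold.  With
`x, x_{i,j} ∈ (0,1)`, `α_i x_{i,j} - x ∈ ℤ`, for `Re s < 0`, `s ∉ ℤ`:
`Γ(s) cos(πs/2) [ dχ*(ζ(s,x)+ζ(s,1-x)) + ∑_i ∑_j α_i^{-s}(ζ(s,x_{i,j})+ζ(s,1-x_{i,j})) ]`
equals
`∑_{n≥1} (χ* + ∑_i 1/α_i) d cos(2πnx)(2πn)^s/n
  + ∑_i ∑_{n≥1, α_i ∤ n} (∑_j cos(2πn x_{i,j})) (2πn/α_i)^s / n`,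
with all series converging absolutely. -/
theorem stmt14 (d : ℕ) (hd : 0 < d) (χstar : ℤ) (ι : Type) [Fintype ι]
    (α : ι → ℕ) (hα : ∀ i, 0 < α i)
    (x : ℝ) (hx : x ∈ Set.Ioo (0 : ℝ) 1)
    (X : ι → Fin d → ℝ) (hX : ∀ i j, X i j ∈ Set.Ioo (0 : ℝ) 1)
    (hXint : ∀ i j, ∃ k : ℤ, (α i : ℝ) * X i j - x = (k : ℝ))
    (s : ℂ) (hs : s.re < 0) (hsz : ∀ n : ℤ, s ≠ (n : ℂ)) :
    (Summable fun n : ℕ =>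
      ‖((((χstar : ℝ) + ∑ i, (1 : ℝ) / (α i)) * d *
            Real.cos (2 * Real.pi * (n + 1) * x) : ℝ) : ℂ) *
          (2 * Real.pi * ((n : ℝ) + 1) : ℂ) ^ s / ((n : ℂ) + 1)‖) ∧
    (∀ i : ι, Summable fun n : ℕ =>
      ‖(if α i ∣ (n + 1) then (0 : ℂ) else
          (((∑ j, Real.cos (2 * Real.pi * (n + 1) * X i j)) : ℝ) : ℂ) *
            ((2 * Real.pi * ((n : ℝ) + 1) / (α i) : ℝ) : ℂ) ^ s / ((n : ℂ) + 1))‖) ∧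
    Complex.Gamma s * Complex.cos (Real.pi * s / 2) *
        ((d : ℂ) * (χstar : ℂ) *
            (hurwitzZeta (x : UnitAddCircle) s +
              hurwitzZeta ((1 - x : ℝ) : UnitAddCircle) s) +
          ∑ i, ∑ j, ((α i : ℕ) : ℂ) ^ (-s) *
            (hurwitzZeta ((X i j : ℝ) : UnitAddCircle) s +
              hurwitzZeta ((1 - X i j : ℝ) : UnitAddCircle) s)) =
      (∑' n : ℕ,
          ((((χstar : ℝ) + ∑ i, (1 : ℝ) / (α i)) * d *
              Real.cos (2 * Real.pi * (n + 1) * x) : ℝ) : ℂ) *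
            (2 * Real.pi * ((n : ℝ) + 1) : ℂ) ^ s / ((n : ℂ) + 1)) +
        ∑ i, ∑' n : ℕ,
          (if α i ∣ (n + 1) then (0 : ℂ) else
            (((∑ j, Real.cos (2 * Real.pi * (n + 1) * X i j)) : ℝ) : ℂ) *
              ((2 * Real.pi * ((n : ℝ) + 1) / (α i) : ℝ) : ℂ) ^ s / ((n : ℂ) + 1)) :=
  stmt14_general d χstar ι α hα x X hXint s hs hsz
end
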